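/- arXiv:2107.03693 — 4 statements merged into one kernel-verified Lean document; each statement's English description precedes it below -/
import Mathlib

section
/- Let H be a complex Hilbert space, ℳ ⊆ B(H) a von Neumann algebra, and (Σ, ℋ, ρ) a measure space. If F : Σ → ℳ is weak* measurable (i.e., σ ↦ ⟨F(σ)h, k⟩ is measurable for all h, k ∈ H) and the lower integral of σ ↦ ‖F(σ)‖ with respect to ρ is finite, then F is weak* integrable; moreover the weak* integral ∫_Σ F dρ lies in ℳ and satisfies the triangle inequality ‖∫_Σ F dρ‖ ≤ ⨍_Σ ‖F‖ dρ, where ⨍ denotes the lower integral. -/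
/-!
Each matrix coefficient `σ ↦ ‖⟪F σ h, k⟫‖` is a measurable minorant of `‖F σ‖ ‖h‖ ‖k‖`, so its
integral is at most `L ‖h‖ ‖k‖`, where `L` is the lower integral of `‖F‖`. Hence
`(h, k) ↦ ∫ ⟪F σ h, k⟫ dρ` is a bounded sesquilinear form, represented by an operator `I` with
`‖I‖ ≤ L`. An operator commuting with every `F σ` commutes with `I`, so `I` lies in the double
commutant `ℳ'' = ℳ`. Pairing with `H^∞` amounts to exchanging sum and integral, which is allowed
because `∑ ‖hₙ‖ ‖kₙ‖ < ∞` for square-summable `(hₙ)`, `(kₙ)`.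
-/

open MeasureTheory ENNReal
open scoped InnerProductSpace

/-- The lower integral of a (possibly nonmeasurable) function `h : α → ℝ≥0∞`:
the supremum of integrals of measurable a.e. minorants. -/
noncomputable def lowerIntegral {α : Type*} [MeasurableSpace α] (ρ : Measure α)
    (h : α → ℝ≥0∞) : ℝ≥0∞ :=
  ⨆ (g : α → ℝ≥0∞) (_ : Measurable g) (_ : ∀ᵐ x ∂ρ, g x ≤ h x), ∫⁻ x, g x ∂ρ

/-- `I` is the weak* integral of `F` with respect to `ρ`: pairing against all pairs of
square-summable sequences of vectors (i.e. against elements of `H^∞`), the sum of the inner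
products of `I` equals the integral of the corresponding sums for `F`. -/
def IsWeakStarIntegral {H : Type*} [NormedAddCommGroup H] [InnerProductSpace ℂ H]
    [CompleteSpace H] {α : Type*} [MeasurableSpace α] (ρ : Measure α)
    (F : α → H →L[ℂ] H) (I : H →L[ℂ] H) : Prop :=
  ∀ h k : ℕ → H, Summable (fun n => ‖h n‖ ^ 2) → Summable (fun n => ‖k n‖ ^ 2) →
    ∑' n, ⟪I (h n), k n⟫_ℂ = ∫ σ, (∑' n, ⟪F σ (h n), k n⟫_ℂ) ∂ρ

open scoped NNReal

section LowerIntegral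

variable {α : Type*} [MeasurableSpace α] {ρ : Measure α} {f g : α → ℝ≥0∞}

theorem lintegral_le_lowerIntegral (hg : Measurable g) (hgf : ∀ᵐ x ∂ρ, g x ≤ f x) :
    ∫⁻ x, g x ∂ρ ≤ lowerIntegral ρ f :=
  le_iSup₂_of_le g hg (le_iSup_of_le hgf le_rfl)

theorem lintegral_le_lowerIntegral_mul {c : ℝ≥0∞} (hg : Measurable g) (hc : c ≠ ∞)
    (hgf : ∀ᵐ x ∂ρ, g x ≤ f x * c) : ∫⁻ x, g x ∂ρ ≤ lowerIntegral ρ f * c := by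
  rcases eq_or_ne c 0 with rfl | hc0
  · simp only [mul_zero, nonpos_iff_eq_zero] at hgf
    simp [lintegral_congr_ae hgf]
  calc ∫⁻ x, g x ∂ρ = (∫⁻ x, g x / c ∂ρ) * c := by
        rw [← lintegral_mul_const _ (hg.div_const c)]
        simp only [ENNReal.div_mul_cancel hc0 hc]
    _ ≤ lowerIntegral ρ f * c := by
        gcongr
        exact lintegral_le_lowerIntegral (hg.div_const c)
          (hgf.mono fun x hx => ENNReal.div_le_of_le_mul hx)

end LowerIntegral

section SesquilinearForm

variable {𝕜 H : Type*} [RCLike 𝕜] [NormedAddCommGroup H] [InnerProductSpace 𝕜 H]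
  {α : Type*} [MeasurableSpace α] {μ : Measure α} {F : α → H →L[𝕜] H}

theorem enorm_inner_apply_le (T : H →L[𝕜] H) (h k : H) :
    ‖⟪T h, k⟫_𝕜‖ₑ ≤ ‖T‖ₑ * ‖h‖ₑ * ‖k‖ₑ := by
  simp only [← ofReal_norm]
  rw [← ENNReal.ofReal_mul (by positivity), ← ENNReal.ofReal_mul (by positivity)]
  exact ENNReal.ofReal_le_ofReal <| (norm_inner_le_norm _ _).trans <|
    mul_le_mul_of_nonneg_right (T.le_opNorm h) (norm_nonneg k)

theorem lintegral_enorm_inner_le_lowerIntegral (h k : H)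
    (hmeas : Measurable fun σ => ⟪F σ h, k⟫_𝕜) :
    ∫⁻ σ, ‖⟪F σ h, k⟫_𝕜‖ₑ ∂μ ≤ lowerIntegral μ (fun σ => ‖F σ‖ₑ) * ‖h‖ₑ * ‖k‖ₑ := by
  rw [mul_assoc]
  exact lintegral_le_lowerIntegral_mul hmeas.enorm (by finiteness) <|
    .of_forall fun σ => (enorm_inner_apply_le (F σ) h k).trans_eq (mul_assoc _ _ _)

theorem InnerProductSpace.norm_continuousLinearMapOfBilin_le [CompleteSpace H]
    (B : H →L⋆[𝕜] H →L[𝕜] 𝕜) : ‖continuousLinearMapOfBilin B‖ ≤ ‖B‖ :=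
  ContinuousLinearMap.opNorm_le_bound _ (norm_nonneg B) fun v => by
    simpa [continuousLinearMapOfBilin] using B.le_opNorm v

theorem integrable_inner_of_lintegral_le {C : ℝ≥0}
    (hmeas : ∀ h k, AEStronglyMeasurable (fun σ => ⟪F σ h, k⟫_𝕜) μ)
    (hbound : ∀ h k, ∫⁻ σ, ‖⟪F σ h, k⟫_𝕜‖ₑ ∂μ ≤ C * ‖h‖ₑ * ‖k‖ₑ) (h k : H) :
    Integrable (fun σ => ⟪F σ h, k⟫_𝕜) μ :=
  ⟨hmeas h k, (hbound h k).trans_lt (by finiteness)⟩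

theorem norm_integral_inner_le_of_lintegral_le {C : ℝ≥0}
    (hbound : ∀ h k, ∫⁻ σ, ‖⟪F σ h, k⟫_𝕜‖ₑ ∂μ ≤ C * ‖h‖ₑ * ‖k‖ₑ) (h k : H) :
    ‖∫ σ, ⟪F σ h, k⟫_𝕜 ∂μ‖ ≤ C * ‖h‖ * ‖k‖ := by
  have := (enorm_integral_le_lintegral_enorm _).trans (hbound h k)
  simp only [← ofReal_norm, ← ENNReal.ofReal_coe_nnreal] at this
  rwa [← ENNReal.ofReal_mul (by positivity), ← ENNReal.ofReal_mul (by positivity),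
    ENNReal.ofReal_le_ofReal_iff (by positivity)] at this

theorem exists_inner_eq_integral_of_lintegral_le [CompleteSpace H] {C : ℝ≥0}
    (hmeas : ∀ h k, AEStronglyMeasurable (fun σ => ⟪F σ h, k⟫_𝕜) μ)
    (hbound : ∀ h k, ∫⁻ σ, ‖⟪F σ h, k⟫_𝕜‖ₑ ∂μ ≤ C * ‖h‖ₑ * ‖k‖ₑ) :
    ∃ I : H →L[𝕜] H, (∀ h k, ⟪I h, k⟫_𝕜 = ∫ σ, ⟪F σ h, k⟫_𝕜 ∂μ) ∧ ‖I‖ ≤ C := by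
  have hint := integrable_inner_of_lintegral_le hmeas hbound
  let B : H →L⋆[𝕜] H →L[𝕜] 𝕜 := LinearMap.mkContinuous₂
    (LinearMap.mk₂'ₛₗ (starRingEnd 𝕜) (RingHom.id 𝕜) (fun h k => ∫ σ, ⟪F σ h, k⟫_𝕜 ∂μ)
      (fun h₁ h₂ k => by
        simp only [map_add, inner_add_left]
        exact integral_add (hint h₁ k) (hint h₂ k))
      (fun c h k => by
        simp only [map_smul, inner_smul_left]
        exact integral_const_mul _ _)
      (fun h k₁ k₂ => by
        simp only [inner_add_right]
        exact integral_add (hint h k₁) (hint h k₂))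
      (fun c h k => by
        simp only [inner_smul_right]
        exact integral_const_mul _ _))
    C (norm_integral_inner_le_of_lintegral_le hbound)
  exact ⟨InnerProductSpace.continuousLinearMapOfBilin B,
    InnerProductSpace.continuousLinearMapOfBilin_apply B,
    (InnerProductSpace.norm_continuousLinearMapOfBilin_le B).trans
      (LinearMap.mkContinuous₂_norm_le _ C.coe_nonneg _)⟩

theorem commute_of_inner_eq_integral [CompleteSpace H] {I T : H →L[𝕜] H}
    (hT : ∀ σ, Commute T (F σ)) (hI : ∀ h k, ⟪I h, k⟫_𝕜 = ∫ σ, ⟪F σ h, k⟫_𝕜 ∂μ) : Commute T I := by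
  refine ContinuousLinearMap.ext fun x => ext_inner_right 𝕜 fun k => ?_
  calc ⟪T (I x), k⟫_𝕜 = ⟪I x, T.adjoint k⟫_𝕜 := (T.adjoint_inner_right _ _).symm
    _ = ∫ σ, ⟪T (F σ x), k⟫_𝕜 ∂μ := by simp only [hI, T.adjoint_inner_right]
    _ = ∫ σ, ⟪F σ (T x), k⟫_𝕜 ∂μ := by
        congr 1 with σ
        exact congrArg (⟪·, k⟫_𝕜) (DFunLike.congr_fun (hT σ).eq x)
    _ = ⟪I (T x), k⟫_𝕜 := (hI _ _).symm

theorem mem_centralizer_centralizer_of_inner_eq_integral [CompleteSpace H]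
    {S : Set (H →L[𝕜] H)} {I : H →L[𝕜] H}
    (hFS : ∀ σ, F σ ∈ S) (hI : ∀ h k, ⟪I h, k⟫_𝕜 = ∫ σ, ⟪F σ h, k⟫_𝕜 ∂μ) :
    I ∈ S.centralizer.centralizer :=
  Set.mem_centralizer_iff.mpr fun _ hT =>
    (commute_of_inner_eq_integral (fun σ => (Set.mem_centralizer_iff.mp hT _ (hFS σ)).symm)
      hI).eq

end SesquilinearForm

section WeakStarIntegral

variable {H : Type*} [NormedAddCommGroup H] [InnerProductSpace ℂ H] [CompleteSpace H]
  {α : Type*} [MeasurableSpace α] {μ : Measure α} {F : α → H →L[ℂ] H}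

theorem isWeakStarIntegral_of_inner_eq_integral {I : H →L[ℂ] H} {C : ℝ≥0}
    (hmeas : ∀ h k, AEStronglyMeasurable (fun σ => ⟪F σ h, k⟫_ℂ) μ)
    (hbound : ∀ h k, ∫⁻ σ, ‖⟪F σ h, k⟫_ℂ‖ₑ ∂μ ≤ C * ‖h‖ₑ * ‖k‖ₑ)
    (hI : ∀ h k, ⟪I h, k⟫_ℂ = ∫ σ, ⟪F σ h, k⟫_ℂ ∂μ) : IsWeakStarIntegral μ F I := by
  intro h k hh hk
  have hsum : Summable fun n => C * ‖h n‖ * ‖k n‖ := by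
    simp_rw [mul_assoc]
    refine .mul_left _ (Real.summable_mul_of_Lp_Lq_of_nonneg .two_two (fun _ => norm_nonneg _)
      (fun _ => norm_nonneg _) ?_ ?_) <;> simpa [Real.rpow_two]
  have hfin : ∑' n, ∫⁻ σ, ‖⟪F σ (h n), k n⟫_ℂ‖ₑ ∂μ ≠ ∞ := by
    refine ne_top_of_le_ne_top ?_ (ENNReal.tsum_le_tsum fun n => hbound (h n) (k n))
    have hreal (n : ℕ) : (C : ℝ≥0∞) * ‖h n‖ₑ * ‖k n‖ₑ = .ofReal (C * ‖h n‖ * ‖k n‖) := by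
      rw [ENNReal.ofReal_mul (by positivity), ENNReal.ofReal_mul (by positivity)]
      simp only [ofReal_norm, ENNReal.ofReal_coe_nnreal]
    simp only [hreal]
    rw [← ENNReal.ofReal_tsum_of_nonneg (fun _ => by positivity) hsum]
    exact ENNReal.ofReal_ne_top
  calc ∑' n, ⟪I (h n), k n⟫_ℂ = ∑' n, ∫ σ, ⟪F σ (h n), k n⟫_ℂ ∂μ := tsum_congr fun n => hI _ _
    _ = ∫ σ, ∑' n, ⟪F σ (h n), k n⟫_ℂ ∂μ := (integral_tsum (fun n => hmeas _ _) hfin).symm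

theorem exists_mem_isWeakStarIntegral (M : VonNeumannAlgebra H) (hFM : ∀ σ, F σ ∈ M) {C : ℝ≥0}
    (hmeas : ∀ h k, AEStronglyMeasurable (fun σ => ⟪F σ h, k⟫_ℂ) μ)
    (hbound : ∀ h k, ∫⁻ σ, ‖⟪F σ h, k⟫_ℂ‖ₑ ∂μ ≤ C * ‖h‖ₑ * ‖k‖ₑ) :
    ∃ I ∈ M, IsWeakStarIntegral μ F I ∧ ‖I‖₊ ≤ C := by
  obtain ⟨I, hI, hIC⟩ := exists_inner_eq_integral_of_lintegral_le hmeas hbound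
  refine ⟨I, ?_, isWeakStarIntegral_of_inner_eq_integral hmeas hbound hI, hIC⟩
  rw [← SetLike.mem_coe, ← M.centralizer_centralizer]
  exact mem_centralizer_centralizer_of_inner_eq_integral hFM hI

end WeakStarIntegral

/-- **Existence of weak* integrals.** If `F : Σ → ℳ` is weak* measurable with finite lower
integral of its operator norm, then `F` is weak* integrable (over every measurable set), and
the weak* integral lies in `ℳ` and satisfies the operator norm integral triangle inequality. -/
theorem stmt1 {H : Type*} [NormedAddCommGroup H] [InnerProductSpace ℂ H] [CompleteSpace H]
    (M : VonNeumannAlgebra H) {α : Type*} [MeasurableSpace α] (ρ : Measure α)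
    (F : α → H →L[ℂ] H) (hFM : ∀ σ, F σ ∈ M)
    (hmeas : ∀ h k : H, Measurable fun σ => ⟪F σ h, k⟫_ℂ)
    (hfin : lowerIntegral ρ (fun σ => (‖F σ‖₊ : ℝ≥0∞)) < ∞) :
    (∀ S : Set α, MeasurableSet S →
      ∃ I : H →L[ℂ] H, I ∈ M ∧ IsWeakStarIntegral (ρ.restrict S) F I) ∧
    ∃ I : H →L[ℂ] H, I ∈ M ∧ IsWeakStarIntegral ρ F I ∧
      (‖I‖₊ : ℝ≥0∞) ≤ lowerIntegral ρ (fun σ => (‖F σ‖₊ : ℝ≥0∞)) := by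
  have hbound (h k : H) : ∫⁻ σ, ‖⟪F σ h, k⟫_ℂ‖ₑ ∂ρ ≤
      (lowerIntegral ρ (fun σ => (‖F σ‖₊ : ℝ≥0∞))).toNNReal * ‖h‖ₑ * ‖k‖ₑ := by
    rw [ENNReal.coe_toNNReal hfin.ne]
    exact lintegral_enorm_inner_le_lowerIntegral h k (hmeas h k)
  refine ⟨fun S _ => ?_, ?_⟩
  · obtain ⟨I, hIM, hI, -⟩ := exists_mem_isWeakStarIntegral M hFM
      (fun h k => (hmeas h k).aestronglyMeasurable) fun h k =>
      (lintegral_mono' Measure.restrict_le_self le_rfl).trans (hbound h k)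
    exact ⟨I, hIM, hI⟩
  · obtain ⟨I, hIM, hI, hIC⟩ := exists_mem_isWeakStarIntegral M hFM
      (fun h k => (hmeas h k).aestronglyMeasurable) hbound
    refine ⟨I, hIM, hI, ?_⟩
    rwa [← ENNReal.coe_toNNReal hfin.ne, ENNReal.coe_le_coe]
end

section
/- Let H be a complex Hilbert space, ℳ ⊆ B(H) a von Neumann algebra, (Σ, ℋ, ρ) a measure space, and (Fₙ) a sequence of weak* integrable maps Σ → ℳ such that Fₙ → F pointwise in the strong operator topology, where F : Σ → ℳ. If the upper integral of σ ↦ sup_n ‖Fₙ(σ)‖ with respect to ρ is finite, then F is weak* integrable and ∫_Σ Fₙ dρ → ∫_Σ F dρ in the strong operator topology. -/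
/-!
A finite upper integral of `sup_n ‖Fₙ‖` provides a single integrable majorant `G` of all the `Fₙ`,
hence also of their strong limit `F`. The matrix coefficients of `F` are then integrable, and the
bounded sesquilinear form `(x, y) ↦ ∫ ⟪F σ x, y⟫` is represented by an operator, which lies in `ℳ`
because it commutes with everything that commutes with every `F σ` (bicommutant theorem).
For the convergence, put `yₙ = ∫ Fₙ x - ∫ F x` and test against the unit vector `yₙ / ‖yₙ‖`:
`‖yₙ‖ = ∫ ⟪(Fₙ σ - F σ) x, yₙ / ‖yₙ‖⟫`, which tends to `0` by dominated convergence.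
-/

open MeasureTheory ENNReal Filter
open scoped InnerProductSpace

/-- The upper integral of a (possibly nonmeasurable) function `h : α → ℝ≥0∞`:
the infimum of integrals of measurable a.e. majorants. -/
noncomputable def upperIntegral {α : Type*} [MeasurableSpace α] (ρ : Measure α)
    (h : α → ℝ≥0∞) : ℝ≥0∞ :=
  ⨅ (g : α → ℝ≥0∞) (_ : Measurable g) (_ : ∀ᵐ x ∂ρ, h x ≤ g x), ∫⁻ x, g x ∂ρ

open scoped NNReal Topology

section Normed

variable {𝕜 E F ι : Type*} [NontriviallyNormedField 𝕜] [NormedAddCommGroup E] [NormedSpace 𝕜 E]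
  [NormedAddCommGroup F] [NormedSpace 𝕜 F]

theorem ContinuousLinearMap.opNorm_le_of_tendsto_apply {l : Filter ι} [l.NeBot]
    {A : ι → E →L[𝕜] F} {B : E →L[𝕜] F} {c : ℝ} (hA : ∀ᶠ i in l, ‖A i‖ ≤ c)
    (hAB : ∀ x, Tendsto (fun i => A i x) l (𝓝 (B x))) : ‖B‖ ≤ c := by
  obtain ⟨i, hi⟩ := hA.exists
  refine B.opNorm_le_bound ((norm_nonneg _).trans hi) fun x => ?_
  exact le_of_tendsto (hAB x).norm (hA.mono fun i hi => (A i).le_of_opNorm_le hi x)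

end Normed

theorem exists_integrable_of_upperIntegral_lt_top {α : Type*} [MeasurableSpace α]
    {ρ : Measure α} {h : α → ℝ≥0∞} (hh : upperIntegral ρ h < ∞) :
    ∃ G : α → ℝ≥0, Integrable (fun σ => (G σ : ℝ)) ρ ∧ ∀ᵐ σ ∂ρ, h σ ≤ G σ := by
  simp only [upperIntegral, iInf_lt_iff] at hh
  obtain ⟨g, hg, hhg, hg_lt⟩ := hh
  refine ⟨fun σ => (g σ).toNNReal,
    integrable_toReal_of_lintegral_ne_top hg.aemeasurable hg_lt.ne, ?_⟩
  filter_upwards [hhg, ae_lt_top hg hg_lt.ne] with σ hσ hσ_lt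
  rwa [coe_toNNReal hσ_lt.ne]

section WeakIntegral

variable {H : Type*} [NormedAddCommGroup H] [InnerProductSpace ℂ H]
  {α : Type*} [MeasurableSpace α] {μ : Measure α}

def WeaklyMeasurable (Φ : α → H →L[ℂ] H) : Prop :=
  ∀ x y : H, Measurable fun σ => ⟪Φ σ x, y⟫_ℂ

def IsWeakIntegral (μ : Measure α) (Φ : α → H →L[ℂ] H) (I : H →L[ℂ] H) : Prop :=
  ∀ x y : H, ⟪I x, y⟫_ℂ = ∫ σ, ⟪Φ σ x, y⟫_ℂ ∂μ

theorem weaklyMeasurable_of_tendsto {Φn : ℕ → α → H →L[ℂ] H} {Φ : α → H →L[ℂ] H}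
    (hΦn : ∀ n, WeaklyMeasurable (Φn n))
    (hlim : ∀ σ x, Tendsto (fun n => Φn n σ x) atTop (𝓝 (Φ σ x))) : WeaklyMeasurable Φ :=
  fun x y => measurable_of_tendsto_metrizable' atTop (fun n => hΦn n x y)
    (tendsto_pi_nhds.2 fun σ => (hlim σ x).inner tendsto_const_nhds)

theorem norm_inner_apply_le {A : H →L[ℂ] H} {c : ℝ} (hA : ‖A‖ ≤ c) (x y : H) :
    ‖⟪A x, y⟫_ℂ‖ ≤ c * (‖x‖ * ‖y‖) :=
  calc ‖⟪A x, y⟫_ℂ‖ ≤ ‖A x‖ * ‖y‖ := norm_inner_le_norm _ _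
    _ ≤ c * ‖x‖ * ‖y‖ := by gcongr; exact A.le_of_opNorm_le hA x
    _ = c * (‖x‖ * ‖y‖) := mul_assoc _ _ _

variable {Φ : α → H →L[ℂ] H} {G : α → ℝ}

theorem WeaklyMeasurable.integrable_inner (hΦ : WeaklyMeasurable Φ) (hG : Integrable G μ)
    (hbd : ∀ᵐ σ ∂μ, ‖Φ σ‖ ≤ G σ) (x y : H) : Integrable (fun σ => ⟪Φ σ x, y⟫_ℂ) μ :=
  (hG.mul_const (‖x‖ * ‖y‖)).mono' (hΦ x y).aestronglyMeasurable
    (hbd.mono fun _ hσ => norm_inner_apply_le hσ x y)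

theorem norm_integral_inner_le (hG : Integrable G μ) (hbd : ∀ᵐ σ ∂μ, ‖Φ σ‖ ≤ G σ) (x y : H) :
    ‖∫ σ, ⟪Φ σ x, y⟫_ℂ ∂μ‖ ≤ (∫ σ, G σ ∂μ) * (‖x‖ * ‖y‖) := by
  rw [← integral_mul_const]
  exact norm_integral_le_of_norm_le (hG.mul_const _)
    (hbd.mono fun _ hσ => norm_inner_apply_le hσ x y)

theorem tendsto_weakIntegral_apply_of_dominated_convergence {Φn : ℕ → α → H →L[ℂ] H}
    {In : ℕ → H →L[ℂ] H} {I : H →L[ℂ] H} (hΦn : ∀ n, WeaklyMeasurable (Φn n))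
    (hΦ : WeaklyMeasurable Φ) (hG : Integrable G μ) (hbdn : ∀ n, ∀ᵐ σ ∂μ, ‖Φn n σ‖ ≤ G σ)
    (hbd : ∀ᵐ σ ∂μ, ‖Φ σ‖ ≤ G σ) (x : H)
    (hlim : ∀ᵐ σ ∂μ, Tendsto (fun n => Φn n σ x) atTop (𝓝 (Φ σ x)))
    (hIn : ∀ n, IsWeakIntegral μ (Φn n) (In n)) (hI : IsWeakIntegral μ Φ I) :
    Tendsto (fun n => In n x) atTop (𝓝 (I x)) := by
  set y : ℕ → H := fun n => In n x - I x
  set v : ℕ → H := fun n => ((‖y n‖ : ℂ))⁻¹ • y n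
  have hv : ∀ n, ‖v n‖ ≤ 1 := fun n => by
    rw [norm_smul, norm_inv, Complex.norm_real, norm_norm]
    exact inv_mul_le_one_of_le₀ le_rfl (norm_nonneg _)
  have hyv : ∀ n, ⟪y n, v n⟫_ℂ = ‖y n‖ := fun n => by
    simp only [v, inner_smul_right, inner_self_eq_norm_sq_to_K, Complex.coe_algebraMap, pow_two,
      ← mul_assoc, inv_mul_mul_self]
  have hy_eq : ∀ n, (‖y n‖ : ℂ) = ∫ σ, ⟪Φn n σ x - Φ σ x, v n⟫_ℂ ∂μ := fun n => by
    simp only [← hyv, y, inner_sub_left, hIn n x, hI x]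
    exact (integral_sub ((hΦn n).integrable_inner hG (hbdn n) _ _)
      (hΦ.integrable_inner hG hbd _ _)).symm
  have hdiff : ∀ n, ∀ᵐ σ ∂μ, ‖Φn n σ x - Φ σ x‖ ≤ 2 * G σ * ‖x‖ := fun n => by
    filter_upwards [hbdn n, hbd] with σ hσn hσ
    calc ‖Φn n σ x - Φ σ x‖ ≤ ‖Φn n σ x‖ + ‖Φ σ x‖ := norm_sub_le _ _
      _ ≤ G σ * ‖x‖ + G σ * ‖x‖ :=
        add_le_add ((Φn n σ).le_of_opNorm_le hσn x) ((Φ σ).le_of_opNorm_le hσ x)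
      _ = 2 * G σ * ‖x‖ := by ring
  have hint : Tendsto (fun n => ∫ σ, ⟪Φn n σ x - Φ σ x, v n⟫_ℂ ∂μ) atTop (𝓝 0) := by
    have hinner_le : ∀ n σ, ‖⟪Φn n σ x - Φ σ x, v n⟫_ℂ‖ ≤ ‖Φn n σ x - Φ σ x‖ := fun n σ =>
      (norm_inner_le_norm _ _).trans (mul_le_of_le_one_right (norm_nonneg _) (hv n))
    simpa only [integral_zero] using
      tendsto_integral_of_dominated_convergence (fun σ => 2 * G σ * ‖x‖)
      (fun n => (((hΦn n) x (v n)).sub (hΦ x (v n))).aestronglyMeasurable.congr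
        (.of_forall fun σ => (inner_sub_left _ _ _).symm))
      ((hG.const_mul 2).mul_const _)
      (fun n => (hdiff n).mono fun σ hσ => (hinner_le n σ).trans hσ)
      (hlim.mono fun σ hσ => squeeze_zero_norm (hinner_le · σ)
        (tendsto_iff_norm_sub_tendsto_zero.1 hσ))
  have hnorm := hint.norm
  simp only [← hy_eq, Complex.norm_real, norm_norm, norm_zero] at hnorm
  exact tendsto_iff_norm_sub_tendsto_zero.2 hnorm

variable [CompleteSpace H]

theorem WeaklyMeasurable.exists_isWeakIntegral (hΦ : WeaklyMeasurable Φ) (hG : Integrable G μ)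
    (hbd : ∀ᵐ σ ∂μ, ‖Φ σ‖ ≤ G σ) : ∃ I : H →L[ℂ] H, IsWeakIntegral μ Φ I := by
  have hint := hΦ.integrable_inner hG hbd
  let B : H →L⋆[ℂ] H →L[ℂ] ℂ := LinearMap.mkContinuous₂
    (LinearMap.mk₂'ₛₗ (starRingEnd ℂ) (RingHom.id ℂ) (fun x y => ∫ σ, ⟪Φ σ x, y⟫_ℂ ∂μ)
      (fun x₁ x₂ y => by simp only [map_add, inner_add_left, integral_add (hint x₁ y) (hint x₂ y)])
      (fun c x y => by simp only [map_smul, inner_smul_left, integral_const_mul, smul_eq_mul])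
      (fun x y₁ y₂ => by simp only [inner_add_right, integral_add (hint x y₁) (hint x y₂)])
      (fun c x y => by
        simp only [inner_smul_right, integral_const_mul, smul_eq_mul, RingHom.id_apply]))
    (∫ σ, G σ ∂μ) fun x y => by
      simpa only [LinearMap.mk₂'ₛₗ_apply, mul_assoc] using norm_integral_inner_le hG hbd x y
  exact ⟨InnerProductSpace.continuousLinearMapOfBilin B, fun x y => by
    simp [B, InnerProductSpace.continuousLinearMapOfBilin_apply]⟩

theorem IsWeakIntegral.mem {M : VonNeumannAlgebra H} {I : H →L[ℂ] H}
    (hI : IsWeakIntegral μ Φ I) (hΦM : ∀ σ, Φ σ ∈ M) : I ∈ M := by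
  suffices I ∈ (M : Set (H →L[ℂ] H)).centralizer.centralizer by
    rwa [M.centralizer_centralizer] at this
  intro T hT
  ext x
  refine ext_inner_right ℂ fun y => ?_
  have hcomm : ∀ σ, Φ σ (T x) = T (Φ σ x) := fun σ =>
    congrArg (· x) (hT (Φ σ) (hΦM σ))
  calc ⟪T (I x), y⟫_ℂ = ⟪I x, T.adjoint y⟫_ℂ := (T.adjoint_inner_right _ _).symm
    _ = ∫ σ, ⟪Φ σ (T x), y⟫_ℂ ∂μ := by
        simp only [hI x, hcomm, ContinuousLinearMap.adjoint_inner_right]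
    _ = ⟪I (T x), y⟫_ℂ := (hI _ _).symm

theorem IsWeakIntegral.isWeakStarIntegral {I : H →L[ℂ] H} (hI : IsWeakIntegral μ Φ I)
    (hΦ : WeaklyMeasurable Φ) (hG : Integrable G μ) (hbd : ∀ᵐ σ ∂μ, ‖Φ σ‖ ≤ G σ) :
    IsWeakStarIntegral μ Φ I := by
  intro h k hh hk
  have hhk : Summable fun n => ‖h n‖ * ‖k n‖ :=
    .of_nonneg_of_le (fun n => by positivity)
      (fun n => by nlinarith [sq_nonneg (‖h n‖ - ‖k n‖)]) ((hh.add hk).mul_right (1 / 2))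
  have hlint : ∀ n, ∫⁻ σ, ‖⟪Φ σ (h n), k n⟫_ℂ‖ₑ ∂μ
      ≤ ENNReal.ofReal (‖h n‖ * ‖k n‖) * ∫⁻ σ, ‖G σ‖ₑ ∂μ := fun n => by
    rw [← lintegral_const_mul' _ _ ofReal_ne_top]
    refine lintegral_mono_ae (hbd.mono fun σ hσ => ?_)
    have hGσ : 0 ≤ G σ := (norm_nonneg _).trans hσ
    rw [← ofReal_norm, Real.enorm_of_nonneg hGσ, ← ofReal_mul (by positivity), mul_comm]
    exact ofReal_le_ofReal (norm_inner_apply_le hσ _ _)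
  have hfin : ∑' n, ∫⁻ σ, ‖⟪Φ σ (h n), k n⟫_ℂ‖ₑ ∂μ ≠ ∞ := by
    refine ne_top_of_le_ne_top ?_ (ENNReal.tsum_le_tsum hlint)
    rw [ENNReal.tsum_mul_right, ← ofReal_tsum_of_nonneg (fun n => by positivity) hhk]
    exact mul_ne_top ofReal_ne_top hG.2.ne
  simp only [hI _ _]
  exact (integral_tsum (fun n => (hΦ _ _).aestronglyMeasurable) hfin).symm

theorem IsWeakStarIntegral.isWeakIntegral {I : H →L[ℂ] H} (hI : IsWeakStarIntegral μ Φ I) :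
    IsWeakIntegral μ Φ I := by
  intro x y
  let e : H → ℕ → H := fun z => Pi.single 0 z
  have hsingle : ∀ z : H, Summable fun n => ‖e z n‖ ^ 2 :=
    fun z => summable_of_ne_finset_zero (s := {0}) fun n hn => by
      simp [e, Finset.mem_singleton.not.1 hn]
  have htsum : ∀ A : H →L[ℂ] H, ∑' n, ⟪A (e x n), e y n⟫_ℂ = ⟪A x, y⟫_ℂ := fun A => by
    rw [tsum_eq_single 0 fun n hn => by simp [e, hn]]
    simp [e]
  simpa only [htsum] using hI _ _ (hsingle x) (hsingle y)

end WeakIntegral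

theorem stmt2_general {H : Type*} [NormedAddCommGroup H] [InnerProductSpace ℂ H] [CompleteSpace H]
    (M : VonNeumannAlgebra H) {α : Type*} [MeasurableSpace α] (ρ : Measure α)
    (Fn : ℕ → α → H →L[ℂ] H) (F : α → H →L[ℂ] H)
    (hFM : ∀ σ, F σ ∈ M)
    (hmeas : ∀ n, ∀ h k : H, Measurable fun σ => ⟪Fn n σ h, k⟫_ℂ)
    (hSOT : ∀ σ, ∀ x : H, Tendsto (fun n => Fn n σ x) atTop (nhds (F σ x)))
    (hbound : upperIntegral ρ (fun σ => ⨆ n, (‖Fn n σ‖₊ : ℝ≥0∞)) < ∞) :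
    (∀ S : Set α, MeasurableSet S →
      ∃ I : H →L[ℂ] H, I ∈ M ∧ IsWeakStarIntegral (ρ.restrict S) F I) ∧
    ∀ (I : H →L[ℂ] H) (J : ℕ → H →L[ℂ] H),
      IsWeakStarIntegral ρ F I → (∀ n, IsWeakStarIntegral ρ (Fn n) (J n)) →
      ∀ x : H, Tendsto (fun n => J n x) atTop (nhds (I x)) := by
  obtain ⟨G, hG, hGbd⟩ := exists_integrable_of_upperIntegral_lt_top hbound
  have hbdn : ∀ᵐ σ ∂ρ, ∀ n, ‖Fn n σ‖ ≤ G σ := by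
    filter_upwards [hGbd] with σ hσ n
    exact_mod_cast (le_iSup (fun m => (‖Fn m σ‖₊ : ℝ≥0∞)) n).trans hσ
  have hbd : ∀ᵐ σ ∂ρ, ‖F σ‖ ≤ G σ := hbdn.mono fun σ hσ =>
    ContinuousLinearMap.opNorm_le_of_tendsto_apply (.of_forall hσ) (hSOT σ)
  have hF : WeaklyMeasurable F := weaklyMeasurable_of_tendsto hmeas hSOT
  refine ⟨fun S _ => ?_, fun I J hI hJ x => ?_⟩
  · obtain ⟨I, hI⟩ := hF.exists_isWeakIntegral hG.restrict (ae_restrict_of_ae hbd)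
    exact ⟨I, hI.mem hFM, hI.isWeakStarIntegral hF hG.restrict (ae_restrict_of_ae hbd)⟩
  · exact tendsto_weakIntegral_apply_of_dominated_convergence hmeas hF hG
      (fun n => hbdn.mono fun σ hσ => hσ n) hbd x (.of_forall fun σ => hSOT σ x)
      (fun n => (hJ n).isWeakIntegral) hI.isWeakIntegral

/-- **Operator-valued dominated convergence theorem (SOT case).** If the weak* integrable
maps `Fₙ : Σ → ℳ` converge to `F : Σ → ℳ` pointwise in the strong operator topology and the
upper integral of `sup_n ‖Fₙ‖` is finite, then `F` is weak* integrable and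
`∫ Fₙ dρ → ∫ F dρ` in the strong operator topology. -/
theorem stmt2 {H : Type*} [NormedAddCommGroup H] [InnerProductSpace ℂ H] [CompleteSpace H]
    (M : VonNeumannAlgebra H) {α : Type*} [MeasurableSpace α] (ρ : Measure α)
    (Fn : ℕ → α → H →L[ℂ] H) (F : α → H →L[ℂ] H)
    (hFnM : ∀ n σ, Fn n σ ∈ M) (hFM : ∀ σ, F σ ∈ M)
    (hmeas : ∀ n, ∀ h k : H, Measurable fun σ => ⟪Fn n σ h, k⟫_ℂ)
    (hintegrable : ∀ n, ∀ S : Set α, MeasurableSet S →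
      ∃ I : H →L[ℂ] H, I ∈ M ∧ IsWeakStarIntegral (ρ.restrict S) (Fn n) I)
    (hSOT : ∀ σ, ∀ x : H, Tendsto (fun n => Fn n σ x) atTop (nhds (F σ x)))
    (hbound : upperIntegral ρ (fun σ => ⨆ n, (‖Fn n σ‖₊ : ℝ≥0∞)) < ∞) :
    (∀ S : Set α, MeasurableSet S →
      ∃ I : H →L[ℂ] H, I ∈ M ∧ IsWeakStarIntegral (ρ.restrict S) F I) ∧
    ∀ (I : H →L[ℂ] H) (J : ℕ → H →L[ℂ] H),
      IsWeakStarIntegral ρ F I → (∀ n, IsWeakStarIntegral ρ (Fn n) (J n)) →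
      ∀ x : H, Tendsto (fun n => J n x) atTop (nhds (I x)) :=
  stmt2_general M ρ Fn F hFM hmeas hSOT hbound
end

section
/- Let f ∈ L¹(ℝ) be bounded with f̂ ∈ L¹(ℝ) and supp f̂ ⊆ [0, σ] for some σ > 0. Then for all λ₁, λ₂ ∈ ℝ, f^{[1]}(λ₁, λ₂) = (i/2π) ∫_{ℝ₊²} f̂(u + v) e^{iλ₁u} e^{iλ₂v} du dv. -/
/-!
By Fourier inversion, `f x = (2π)⁻¹ ∫ f̂ ξ e^{ixξ} dξ`. Since `f̂` is supported in `[0, σ]`, also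
`ξ f̂ ξ` is integrable, so the divided difference, including the derivative on the diagonal,
passes under the integral: `f^{[1]}(λ₁, λ₂) = (2π)⁻¹ ∫ f̂ ξ e_ξ^{[1]}(λ₁, λ₂) dξ` with
`e_ξ x = e^{ixξ}`. For an exponential, `e_ξ^{[1]}(λ₁, λ₂) = i ∫₀^ξ e^{iλ₁u} e^{iλ₂(ξ-u)} du`, and the
shear `(u, v) ↦ (u, u + v)` turns `∫_{ξ ≥ 0} ∫₀^ξ` into the integral over the quadrant `ℝ₊²`.
-/

open MeasureTheory

/-- The Fourier transform `f̂(ξ) = ∫ e^{−iξx} f(x) dx`. -/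
noncomputable def fhat (f : ℝ → ℂ) (ξ : ℝ) : ℂ :=
  ∫ x : ℝ, Complex.exp (-(Complex.I * ξ * x)) * f x

/-- The first divided difference of `f`, extended to the diagonal by `f'`. -/
noncomputable def dd1 (f : ℝ → ℂ) (x y : ℝ) : ℂ :=
  if x = y then deriv f x else (f x - f y) / ((x : ℂ) - (y : ℂ))

open Complex Set FourierTransform

theorem norm_cexp_I_mul_mul (x ξ : ℝ) : ‖cexp (I * x * ξ)‖ = 1 := by
  rw [show I * x * ξ = ((x * ξ : ℝ) : ℂ) * I by push_cast; ring, norm_exp_ofReal_mul_I]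

theorem hasDerivAt_cexp_I_mul_mul (ξ l : ℝ) :
    HasDerivAt (fun x : ℝ => cexp (I * x * ξ)) (I * ξ * cexp (I * l * ξ)) l := by
  have h : HasDerivAt (fun x : ℝ => I * x * ξ) (I * ξ) l := by
    simpa using ((hasDerivAt_id (l : ℂ)).const_mul I).mul_const (ξ : ℂ) |>.comp_ofReal
  simpa [mul_comm] using h.cexp

theorem MeasureTheory.Integrable.mul_cexp_I_mul {G : ℝ → ℂ} (hG : Integrable G) (x : ℝ) :
    Integrable fun ξ : ℝ => G ξ * cexp (I * x * ξ) :=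
  hG.mul_bdd (by fun_prop) (Filter.Eventually.of_forall fun ξ => (norm_cexp_I_mul_mul x ξ).le)

theorem fhat_eq_fourier (f : ℝ → ℂ) (ξ : ℝ) : fhat f ξ = 𝓕 f (ξ / (2 * Real.pi)) := by
  rw [fhat, Real.fourier_real_eq_integral_exp_smul]
  congr 1 with x
  rw [smul_eq_mul]
  congr 2
  push_cast
  field_simp

theorem continuous_fhat {f : ℝ → ℂ} (hf : Integrable f) : Continuous (fhat f) := by
  simp_rw [funext (fhat_eq_fourier f)]
  exact (VectorFourier.fourierIntegral_continuous Real.continuous_fourierChar continuous_inner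
    hf).comp (continuous_id.div_const _)

theorem fourier_eq_fhat (f : ℝ → ℂ) (w : ℝ) : 𝓕 f w = fhat f (2 * Real.pi * w) := by
  rw [fhat_eq_fourier, mul_div_cancel_left₀ _ Real.two_pi_pos.ne']

theorem integral_fhat_mul_cexp {f : ℝ → ℂ} (hcont : Continuous f) (hf : Integrable f)
    (hfhat : Integrable (fhat f)) (x : ℝ) :
    ∫ ξ, fhat f ξ * cexp (I * x * ξ) = 2 * Real.pi * f x := by
  have hF : Integrable (𝓕 f) := by
    simpa only [funext (fourier_eq_fhat f)] using hfhat.comp_mul_left' Real.two_pi_pos.ne'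
  have hrescale := Measure.integral_comp_mul_left (fun ξ => fhat f ξ * cexp (I * x * ξ)) (2 * Real.pi)
  rw [abs_of_pos (inv_pos.2 Real.two_pi_pos)] at hrescale
  have hinv : ∫ w : ℝ, fhat f (2 * Real.pi * w) * cexp (I * x * ↑(2 * Real.pi * w)) = f x := by
    conv_rhs => rw [← hcont.fourierInv_fourier_eq hf hF, Real.fourierInv_eq']
    congr 1 with w
    rw [smul_eq_mul, fourier_eq_fhat, mul_comm, Real.inner_apply]
    push_cast
    ring_nf
  rw [hinv, Complex.real_smul] at hrescale
  rw [hrescale]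
  push_cast
  field_simp

theorem MeasureTheory.Integrable.ofReal_mul_of_abs_le {G : ℝ → ℂ} (hG : Integrable G) {R : ℝ}
    (hsupp : ∀ ξ, G ξ ≠ 0 → |ξ| ≤ R) : Integrable fun ξ : ℝ => (ξ : ℂ) * G ξ := by
  refine (hG.norm.const_mul R).mono' (by fun_prop) (Filter.Eventually.of_forall fun ξ => ?_)
  by_cases hξ : G ξ = 0
  · simp [hξ]
  · rw [norm_mul, norm_real, Real.norm_eq_abs]
    exact mul_le_mul_of_nonneg_right (hsupp ξ hξ) (norm_nonneg _)

theorem hasDerivAt_integral_mul_cexp {G : ℝ → ℂ} (hG : Integrable G)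
    (hξG : Integrable fun ξ : ℝ => (ξ : ℂ) * G ξ) (l : ℝ) :
    HasDerivAt (fun x : ℝ => ∫ ξ, G ξ * cexp (I * x * ξ))
      (∫ ξ, G ξ * (I * ξ * cexp (I * l * ξ))) l := by
  have hderiv_norm : ∀ x ξ : ℝ, ‖G ξ * (I * ξ * cexp (I * x * ξ))‖ = ‖(ξ : ℂ) * G ξ‖ := by
    intro x ξ
    simp only [norm_mul, norm_I, norm_cexp_I_mul_mul]
    ring
  refine (hasDerivAt_integral_of_dominated_loc_of_deriv_le (bound := fun ξ : ℝ => ‖(ξ : ℂ) * G ξ‖)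
    (F' := fun x ξ => G ξ * (I * ξ * cexp (I * x * ξ)))
    Filter.univ_mem (Filter.Eventually.of_forall fun x => (hG.mul_cexp_I_mul x).aestronglyMeasurable)
    (hG.mul_cexp_I_mul l) ?_ ?_ hξG.norm ?_).2
  · exact hG.aestronglyMeasurable.mul (by fun_prop)
  · exact Filter.Eventually.of_forall fun ξ x _ => (hderiv_norm x ξ).le
  · exact Filter.Eventually.of_forall fun ξ x _ => (hasDerivAt_cexp_I_mul_mul ξ x).const_mul (G ξ)

theorem dd1_integral_mul_cexp {G : ℝ → ℂ} (hG : Integrable G)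
    (hξG : Integrable fun ξ : ℝ => (ξ : ℂ) * G ξ) (l₁ l₂ : ℝ) :
    dd1 (fun x : ℝ => ∫ ξ, G ξ * cexp (I * x * ξ)) l₁ l₂
      = ∫ ξ, G ξ * dd1 (fun x : ℝ => cexp (I * x * ξ)) l₁ l₂ := by
  by_cases h : l₁ = l₂
  · subst h
    simp only [dd1, ↓reduceIte, (hasDerivAt_integral_mul_cexp hG hξG l₁).deriv,
      (hasDerivAt_cexp_I_mul_mul _ l₁).deriv]
  · simp only [dd1, if_neg h, mul_div_assoc', mul_sub]
    rw [integral_div, integral_sub (hG.mul_cexp_I_mul l₁) (hG.mul_cexp_I_mul l₂)]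

theorem dd1_cexp_eq_intervalIntegral (ξ l₁ l₂ : ℝ) :
    dd1 (fun x : ℝ => cexp (I * x * ξ)) l₁ l₂
      = I * ∫ u in (0 : ℝ)..ξ, cexp (I * l₁ * u) * cexp (I * l₂ * ↑(ξ - u)) := by
  have hintegrand : ∀ u : ℝ, cexp (I * l₁ * u) * cexp (I * l₂ * ↑(ξ - u))
      = cexp (I * l₂ * ξ) * cexp (I * (l₁ - l₂) * u) := by
    intro u
    rw [← Complex.exp_add, ← Complex.exp_add]
    push_cast
    ring_nf
  simp_rw [hintegrand, intervalIntegral.integral_const_mul]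
  by_cases h : l₁ = l₂
  · subst h
    simp only [dd1, ↓reduceIte, (hasDerivAt_cexp_I_mul_mul ξ l₁).deriv, sub_self, mul_zero,
      zero_mul, exp_zero, intervalIntegral.integral_const, sub_zero, real_smul, mul_one]
    ring
  · have hl : (l₁ : ℂ) - l₂ ≠ 0 := sub_ne_zero.2 (mod_cast h)
    have hshift : cexp (I * l₂ * ξ) * cexp (I * (l₁ - l₂) * ξ) = cexp (I * l₁ * ξ) := by
      rw [← Complex.exp_add]
      ring_nf
    rw [dd1, if_neg h, integral_exp_mul_complex (mul_ne_zero I_ne_zero hl), ← hshift, ofReal_zero,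
      mul_zero, exp_zero]
    field_simp

section Quadrant

variable {E : Type*} [NormedAddCommGroup E]

theorem integrableOn_quadrant_of_continuous {F : ℝ × ℝ → E} (hF : Continuous F) {σ : ℝ}
    (hsupp : ∀ w, F w ≠ 0 → w.1 + w.2 ≤ σ) : IntegrableOn F (Ici 0 ×ˢ Ici 0) := by
  refine (hF.continuousOn.integrableOn_compact (isCompact_Icc.prod isCompact_Icc) :
    IntegrableOn F (Icc 0 σ ×ˢ Icc 0 σ)).of_forall_sdiff_eq_zero
    (measurableSet_Ici.prod measurableSet_Ici) fun w hw => ?_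
  obtain ⟨⟨hw₁, hw₂⟩, hbox⟩ := hw
  by_contra hFw
  have := hsupp w hFw
  exact hbox ⟨⟨hw₁, by linarith [mem_Ici.1 hw₂]⟩, ⟨hw₂, by linarith [mem_Ici.1 hw₁]⟩⟩

variable [NormedSpace ℝ E]

theorem setIntegral_quadrant_eq_integral_setIntegral_Icc {F : ℝ × ℝ → E}
    (hF : IntegrableOn F (Ici 0 ×ˢ Ici 0)) :
    ∫ w in Ici (0 : ℝ) ×ˢ Ici (0 : ℝ), F w = ∫ ξ, ∫ u in Icc 0 ξ, F (u, ξ - u) := by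
  have hQ : MeasurableSet (Ici (0 : ℝ) ×ˢ Ici (0 : ℝ)) := measurableSet_Ici.prod measurableSet_Ici
  let Ψ : ℝ × ℝ → E := fun z => (Ici (0 : ℝ) ×ˢ Ici (0 : ℝ)).indicator F (z.1, z.2 - z.1)
  have hshear : MeasurePreserving (fun z : ℝ × ℝ => (z.1, z.1 + z.2))
      ((volume : Measure ℝ).prod volume) ((volume : Measure ℝ).prod volume) :=
    measurePreserving_prod_add volume volume
  have hemb : MeasurableEmbedding (fun z : ℝ × ℝ => (z.1, z.1 + z.2)) :=
    (MeasurableEquiv.shearAddRight ℝ).measurableEmbedding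
  have hΨ_shear : (Ψ ∘ fun z : ℝ × ℝ => (z.1, z.1 + z.2)) = (Ici 0 ×ˢ Ici 0).indicator F := by
    funext z
    simp [Ψ]
  have hΨ : Integrable Ψ ((volume : Measure ℝ).prod volume) :=
    (hshear.integrable_comp_emb hemb).1 (hΨ_shear ▸ (integrable_indicator_iff hQ).2 hF)
  have hslice : ∀ ξ : ℝ, (fun u => Ψ (u, ξ)) = (Icc 0 ξ).indicator fun u => F (u, ξ - u) := by
    intro ξ
    funext u
    simp only [Ψ, indicator, mem_prod, mem_Ici, mem_Icc, sub_nonneg]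
  calc ∫ w in Ici (0 : ℝ) ×ˢ Ici (0 : ℝ), F w
      = ∫ z, (Ψ ∘ fun z : ℝ × ℝ => (z.1, z.1 + z.2)) z ∂((volume : Measure ℝ).prod volume) := by
        rw [hΨ_shear, integral_indicator hQ, Measure.volume_eq_prod]
    _ = ∫ z, Ψ z ∂((volume : Measure ℝ).prod volume) := hshear.integral_comp hemb Ψ
    _ = ∫ ξ, ∫ u, Ψ (u, ξ) := integral_prod_symm Ψ hΨ
    _ = ∫ ξ, ∫ u in Icc 0 ξ, F (u, ξ - u) := by
        simp_rw [hslice, integral_indicator measurableSet_Icc]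

end Quadrant

theorem stmt17_general (σ : ℝ) (f : ℝ → ℂ)
    (hcont : Continuous f)
    (hf : Integrable f) (hfhat : Integrable (fhat f))
    (hsupp : ∀ ξ : ℝ, fhat f ξ ≠ 0 → ξ ∈ Set.Icc (0 : ℝ) σ) :
    ∀ l₁ l₂ : ℝ,
      dd1 f l₁ l₂ = (Complex.I / (2 * Real.pi)) *
        ∫ w : ℝ × ℝ in Set.Ici (0:ℝ) ×ˢ Set.Ici (0:ℝ),
          fhat f (w.1 + w.2) * Complex.exp (Complex.I * l₁ * w.1) *
            Complex.exp (Complex.I * l₂ * w.2) := by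
  intro l₁ l₂
  let G : ℝ → ℂ := fun ξ => (2 * Real.pi : ℂ)⁻¹ * fhat f ξ
  have hsynth : f = fun x : ℝ => ∫ ξ, G ξ * cexp (I * x * ξ) := by
    funext x
    simp only [G, mul_assoc ((2 * Real.pi : ℂ)⁻¹), integral_const_mul,
      integral_fhat_mul_cexp hcont hf hfhat]
    field_simp
  have hG : Integrable G := hfhat.const_mul _
  have hξG : Integrable fun ξ : ℝ => (ξ : ℂ) * G ξ := hG.ofReal_mul_of_abs_le fun ξ hξ => by
    obtain ⟨hξ₀, hξσ⟩ := hsupp ξ (right_ne_zero_of_mul hξ)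
    rwa [abs_of_nonneg hξ₀]
  have hintegrableOn : IntegrableOn
      (fun w : ℝ × ℝ => fhat f (w.1 + w.2) * cexp (I * l₁ * w.1) * cexp (I * l₂ * w.2))
      (Ici 0 ×ˢ Ici 0) := by
    have hfhat_cont := continuous_fhat hf
    exact integrableOn_quadrant_of_continuous (by fun_prop)
      fun w hw => (hsupp _ (left_ne_zero_of_mul (left_ne_zero_of_mul hw))).2
  have hdd : dd1 f l₁ l₂ = ∫ ξ, G ξ * dd1 (fun x : ℝ => cexp (I * x * ξ)) l₁ l₂ := by
    rw [hsynth]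
    exact dd1_integral_mul_cexp hG hξG l₁ l₂
  rw [hdd, setIntegral_quadrant_eq_integral_setIntegral_Icc hintegrableOn, ← integral_const_mul]
  congr 1 with ξ
  by_cases hξ : fhat f ξ = 0
  · simp [G, hξ]
  rw [dd1_cexp_eq_intervalIntegral, intervalIntegral.integral_of_le (hsupp ξ hξ).1,
    ← integral_Icc_eq_integral_Ioc]
  simp_rw [add_sub_cancel, mul_assoc, integral_const_mul]
  push_cast
  ring

/-- If `f ∈ L¹(ℝ)` is bounded (and continuous) with `f̂ ∈ L¹(ℝ)` and `supp f̂ ⊆ [0, σ]`, then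
`f^{[1]}(λ₁, λ₂) = (i/2π) ∫_{ℝ₊²} f̂(u + v) e^{iλ₁u} e^{iλ₂v} du dv`. -/
theorem stmt17 (σ : ℝ) (hσ : 0 < σ) (f : ℝ → ℂ)
    (hcont : Continuous f) (hbdd : ∃ C : ℝ, ∀ x, ‖f x‖ ≤ C)
    (hf : Integrable f) (hfhat : Integrable (fhat f))
    (hsupp : ∀ ξ : ℝ, fhat f ξ ≠ 0 → ξ ∈ Set.Icc (0 : ℝ) σ) :
    ∀ l₁ l₂ : ℝ,
      dd1 f l₁ l₂ = (Complex.I / (2 * Real.pi)) *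
        ∫ w : ℝ × ℝ in Set.Ici (0:ℝ) ×ˢ Set.Ici (0:ℝ),
          fhat f (w.1 + w.2) * Complex.exp (Complex.I * l₁ * w.1) *
            Complex.exp (Complex.I * l₂ * w.2) :=
  stmt17_general σ f hcont hf hfhat hsupp
end

section
/- Let k ∈ ℕ and let f : ℝ → ℂ be the Fourier transform of a complex Borel measure μ on ℝ, i.e., f(λ) = ∫_ℝ e^{iλξ} μ(dξ), where ∫_ℝ |ξ|^k |μ|(dξ) < ∞. Then for each 1 ≤ j ≤ k, the j-th divided difference of f admits the decomposition f^{[j]}(λ₁, …, λ_{j+1}) = ∫_{Δ_j} ∫_ℝ e^{i t₁ λ₁ ξ} ⋯ e^{i t_{j+1} λ_{j+1} ξ} (iξ)^j μ(dξ) ρ_j(dt), and consequently this gives an integral projective decomposition of f^{[j]} into bounded functions of each variable separately, with ∫_{Δ_j} ∫_ℝ |ξ|^j |μ|(dξ) ρ_j(dt) = (1/j!) ∫_ℝ |ξ|^j |μ|(dξ), so the integral projective tensor norm of f^{[j]} is at most (1/j!) ∫_ℝ |ξ|^j |μ|(dξ). -/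
/-
Differentiating `f(x) = ∫ e^{ixξ} μ(dξ)` under the integral sign `j` times (dominated by the
finite moment `∫ |ξ|^j |μ|(dξ)`) gives `f^{(j)}(x) = ∫ e^{ixξ} (iξ)^j μ(dξ)`. At `x = t·λ` the
exponential splits as `∏ᵢ e^{i tᵢ λᵢ ξ}`, so `f^{[j]}(λ)` is an integral over `Δ_j × ℝ` of a
product of functions of the single variables `λᵢ`. All of them have sup norm `1` except one,
which also carries `(iξ)^j w(ξ)` and has sup norm `|ξ|^j`; integrating `|ξ|^j` over `Δ_j × ℝ`
gives `vol(Δ_j) ∫ |ξ|^j |μ|(dξ)`, and `vol(Δ_j) = 1/j!` by slicing the simplex.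
-/

open MeasureTheory ENNReal

/-- The standard `k`-simplex `Σ_k = {s ∈ ℝ^k : s_i ≥ 0, ∑ s_i ≤ 1}`. -/
def simplexSet (k : ℕ) : Set (Fin k → ℝ) :=
  {s | (∀ i, 0 ≤ s i) ∧ ∑ i, s i ≤ 1}

/-- The barycentric coordinates `(s₁, …, s_k, 1 − s₁ − ⋯ − s_k) ∈ Δ_k`. -/
noncomputable def simplexCoord (k : ℕ) (s : Fin k → ℝ) : Fin (k + 1) → ℝ :=
  fun i => if h : (i : ℕ) < k then s ⟨i, h⟩ else 1 - ∑ i, s i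

/-- The `k`-th divided difference of `f`, extended continuously to all of `ℝ^{k+1}` via the
simplex integral formula `f^{[k]}(λ) = ∫_{Δ_k} f^{(k)}(t ⬝ λ) ρ_k(dt)`. -/
noncomputable def divDiffE (f : ℝ → ℂ) (k : ℕ) (l : Fin (k + 1) → ℝ) : ℂ :=
  ∫ s in simplexSet k, iteratedDeriv k f (∑ i, simplexCoord k s i * l i)

/-- The integral projective tensor norm of `φ : ℝ^{k+1} → ℂ`: the infimum, over integral
projective decompositions `φ(λ) = ∫_Σ ∏ᵢ ψᵢ(λᵢ, σ) ρ(dσ)` into bounded measurable functions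
of each variable separately, of `∫_Σ ∏ᵢ ‖ψᵢ(·, σ)‖_∞ ρ(dσ)`. -/
noncomputable def iptpNormN (k : ℕ) (φ : (Fin (k + 1) → ℝ) → ℂ) : ℝ≥0∞ :=
  sInf {C : ℝ≥0∞ | ∃ (Ω : Type) (_ : MeasurableSpace Ω) (ρ : Measure Ω)
    (ψ : Fin (k + 1) → ℝ → Ω → ℂ),
      SigmaFinite ρ ∧
      (∀ i, Measurable fun p : ℝ × Ω => ψ i p.1 p.2) ∧
      (∀ i ω, ∃ Ci : ℝ, ∀ x, ‖ψ i x ω‖ ≤ Ci) ∧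
      (∀ l : Fin (k + 1) → ℝ, φ l = ∫ ω, (∏ i, ψ i (l i) ω) ∂ρ) ∧
      C = upperIntegral ρ (fun ω => ∏ i, ⨆ x : ℝ, (‖ψ i x ω‖₊ : ℝ≥0∞))}

def scaledSimplex (n : ℕ) (r : ℝ) : Set (Fin n → ℝ) :=
  {s | (∀ i, 0 ≤ s i) ∧ ∑ i, s i ≤ r}

lemma measurableSet_scaledSimplex (n : ℕ) (r : ℝ) : MeasurableSet (scaledSimplex n r) := by
  simp only [scaledSimplex, Set.ofPred_and, Set.ofPred_forall]
  exact (MeasurableSet.iInter fun i =>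
      measurableSet_le measurable_const (measurable_pi_apply i)).inter
    (measurableSet_le (by fun_prop) measurable_const)

lemma scaledSimplex_eq_empty {n : ℕ} {r : ℝ} (hr : r < 0) : scaledSimplex n r = ∅ :=
  Set.eq_empty_of_forall_notMem fun _ ⟨hs, hsum⟩ =>
    (Finset.sum_nonneg fun i _ => hs i).not_gt (hsum.trans_lt hr)

lemma preimage_piFinSuccAbove_scaledSimplex (n : ℕ) (r : ℝ) :
    (MeasurableEquiv.piFinSuccAbove (fun _ : Fin (n + 1) => ℝ) 0).symm ⁻¹' scaledSimplex (n + 1) r =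
      {p | 0 ≤ p.1 ∧ p.2 ∈ scaledSimplex n (r - p.1)} := by
  ext p
  simp only [scaledSimplex, Set.mem_preimage, Set.mem_ofPred_eq,
    MeasurableEquiv.piFinSuccAbove_symm_apply, Fin.insertNthEquiv_zero, Fin.consEquiv_apply,
    Fin.sum_cons, Fin.forall_fin_succ, Fin.cons_zero, Fin.cons_succ, and_assoc, le_sub_iff_add_le']

lemma volume_slice_scaledSimplex (n : ℕ) (r x : ℝ) :
    volume (Prod.mk x ⁻¹' {p : ℝ × (Fin n → ℝ) | 0 ≤ p.1 ∧ p.2 ∈ scaledSimplex n (r - p.1)}) =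
      (Set.Icc 0 r).indicator (fun y => volume (scaledSimplex n (r - y))) x := by
  by_cases hx : x ∈ Set.Icc 0 r
  · rw [Set.indicator_of_mem hx]
    congr 1
    ext s
    simp [hx.1]
  · rw [Set.indicator_of_notMem hx]
    rcases not_and_or.1 hx with hx | hx
    · simp [hx]
    · simp [scaledSimplex_eq_empty (sub_neg.2 (not_le.1 hx))]

lemma integral_sub_pow_div_factorial (n : ℕ) {r : ℝ} (hr : 0 ≤ r) :
    ∫ x in Set.Icc 0 r, (r - x) ^ n / n.factorial = r ^ (n + 1) / (n + 1).factorial := by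
  rw [integral_Icc_eq_integral_Ioc, ← intervalIntegral.integral_of_le hr,
    intervalIntegral.integral_div, intervalIntegral.integral_comp_sub_left (fun x => x ^ n),
    sub_self, sub_zero, integral_pow, Nat.factorial_succ]
  push_cast
  field_simp
  simp

lemma volume_scaledSimplex (n : ℕ) {r : ℝ} (hr : 0 ≤ r) :
    volume (scaledSimplex n r) = ENNReal.ofReal (r ^ n / n.factorial) := by
  induction n generalizing r with
  | zero =>
    have : scaledSimplex 0 r = Set.univ := by ext s; simp [scaledSimplex, hr]
    simp [this, volume_pi]
  | succ n ih =>
    have he := (volume_preserving_piFinSuccAbove (fun _ : Fin (n + 1) => ℝ) 0).symm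
    have hT := (measurableSet_scaledSimplex (n + 1) r).preimage he.measurable
    rw [preimage_piFinSuccAbove_scaledSimplex] at hT
    rw [← he.measure_preimage (measurableSet_scaledSimplex _ _).nullMeasurableSet,
      preimage_piFinSuccAbove_scaledSimplex, Measure.volume_eq_prod, Measure.prod_apply hT]
    simp_rw [volume_slice_scaledSimplex]
    rw [lintegral_indicator measurableSet_Icc,
      setLIntegral_congr_fun measurableSet_Icc fun x hx => ih (sub_nonneg.2 hx.2),
      ← ofReal_integral_eq_lintegral_ofReal, integral_sub_pow_div_factorial n hr]
    · exact (Continuous.integrableOn_Icc (by fun_prop))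
    · exact (ae_restrict_iff' measurableSet_Icc).2 (ae_of_all _ fun x hx =>
        div_nonneg (pow_nonneg (sub_nonneg.2 hx.2) n) (Nat.cast_nonneg _))

lemma volume_simplexSet (k : ℕ) : volume (simplexSet k) = ENNReal.ofReal (1 / k.factorial) :=
  (volume_scaledSimplex k zero_le_one).trans (by simp)

instance (k : ℕ) : IsFiniteMeasure (volume.restrict (simplexSet k)) :=
  isFiniteMeasure_restrict.2 (by simp [volume_simplexSet])

lemma lintegral_enorm_snd_pow (m : Measure ℝ) [SFinite m] (j : ℕ) :
    ∫⁻ ω, ‖ω.2‖ₑ ^ j ∂(volume.restrict (simplexSet j)).prod m =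
      ENNReal.ofReal (1 / j.factorial) * ∫⁻ ξ, ‖ξ‖ₑ ^ j ∂m := by
  rw [lintegral_prod _ (by fun_prop)]
  simp only [lintegral_const, Measure.restrict_apply_univ, volume_simplexSet, mul_comm]

noncomputable def fourierMoment (m : Measure ℝ) (w : ℝ → ℂ) (n : ℕ) (x : ℝ) : ℂ :=
  ∫ ξ, Complex.exp (Complex.I * x * ξ) * (Complex.I * ξ) ^ n * w ξ ∂m

section FourierMoment

variable {m : Measure ℝ} {w : ℝ → ℂ}

lemma integrable_norm_pow_iff_lintegral_lt_top {k : ℕ} :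
    Integrable (fun ξ : ℝ => ‖ξ‖ ^ k) m ↔ ∫⁻ ξ, ‖ξ‖ₑ ^ k ∂m < ∞ := by
  simp only [Integrable, hasFiniteIntegral_iff_enorm, enorm_pow, enorm_norm]
  exact and_iff_right (by fun_prop)

lemma integrable_norm_pow_of_le [IsFiniteMeasure m] {k n : ℕ} (hnk : n ≤ k)
    (hk : Integrable (fun ξ : ℝ => ‖ξ‖ ^ k) m) : Integrable (fun ξ : ℝ => ‖ξ‖ ^ n) m := by
  refine ((integrable_const 1).add hk).mono' (by fun_prop) (ae_of_all _ fun ξ => ?_)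
  rw [Real.norm_of_nonneg (by positivity)]
  show ‖ξ‖ ^ n ≤ 1 + ‖ξ‖ ^ k
  rcases le_total ‖ξ‖ 1 with h | h
  · linarith [pow_le_one₀ (norm_nonneg ξ) h (n := n), pow_nonneg (norm_nonneg ξ) k]
  · linarith [pow_le_pow_right₀ h hnk]

lemma norm_I_mul_pow_mul_le (hw : ∀ ξ, ‖w ξ‖ ≤ 1) (n : ℕ) (ξ : ℝ) :
    ‖(Complex.I * ξ) ^ n * w ξ‖ ≤ ‖ξ‖ ^ n := by
  rw [norm_mul, norm_pow, norm_mul, Complex.norm_I, one_mul, Complex.norm_real]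
  exact mul_le_of_le_one_right (by positivity) (hw ξ)

lemma norm_exp_mul_pow_mul_le (hw : ∀ ξ, ‖w ξ‖ ≤ 1) (n : ℕ) (x ξ : ℝ) :
    ‖Complex.exp (Complex.I * x * ξ) * (Complex.I * ξ) ^ n * w ξ‖ ≤ ‖ξ‖ ^ n := by
  rw [mul_assoc, norm_mul, Complex.norm_exp]
  simpa using norm_I_mul_pow_mul_le hw n ξ

lemma hasDerivAt_fourierMoment (hw : ∀ ξ, ‖w ξ‖ ≤ 1)
    (hwm : AEStronglyMeasurable w m) {n : ℕ} (hn : Integrable (fun ξ : ℝ => ‖ξ‖ ^ n) m)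
    (hn1 : Integrable (fun ξ : ℝ => ‖ξ‖ ^ (n + 1)) m) (x : ℝ) :
    HasDerivAt (fourierMoment m w n) (fourierMoment m w (n + 1) x) x := by
  have hmeas : ∀ n (y : ℝ), AEStronglyMeasurable
      (fun ξ : ℝ => Complex.exp (Complex.I * y * ξ) * (Complex.I * ξ) ^ n * w ξ) m :=
    fun n y => by fun_prop
  have hderiv : ∀ ξ y : ℝ, HasDerivAt
      (fun y : ℝ => Complex.exp (Complex.I * y * ξ) * (Complex.I * ξ) ^ n * w ξ)
      (Complex.exp (Complex.I * y * ξ) * (Complex.I * ξ) ^ (n + 1) * w ξ) y := by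
    intro ξ y
    have := ((((hasDerivAt_id y).ofReal_comp.const_mul Complex.I).mul_const (ξ : ℂ)).cexp).mul_const
      ((Complex.I * ξ) ^ n * w ξ)
    refine (this.congr_deriv ?_).congr_of_eventuallyEq (Filter.Eventually.of_forall fun z => ?_) <;>
      simp only [id_eq, Complex.ofReal_one, mul_one] <;> ring
  exact (hasDerivAt_integral_of_dominated_loc_of_deriv_le (Metric.ball_mem_nhds x one_pos)
    (Filter.Eventually.of_forall fun y => hmeas n y) (hn.mono' (hmeas n x) (ae_of_all _ fun ξ =>
      norm_exp_mul_pow_mul_le hw n x ξ)) (hmeas (n + 1) x)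
    (ae_of_all _ fun ξ y _ => norm_exp_mul_pow_mul_le hw (n + 1) y ξ) hn1
    (ae_of_all _ fun ξ y _ => hderiv ξ y)).2

lemma iteratedDeriv_fourierMoment (hw : ∀ ξ, ‖w ξ‖ ≤ 1)
    (hwm : AEStronglyMeasurable w m) {k : ℕ}
    (hmom : ∀ n ≤ k, Integrable (fun ξ : ℝ => ‖ξ‖ ^ n) m) {n : ℕ} (hnk : n ≤ k) :
    iteratedDeriv n (fourierMoment m w 0) = fourierMoment m w n := by
  induction n with
  | zero => rfl
  | succ n ih =>
    rw [iteratedDeriv_succ, ih (by omega)]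
    exact funext fun x => (hasDerivAt_fourierMoment hw hwm (hmom n (by omega)) (hmom _ hnk) x).deriv

end FourierMoment

lemma iptpNormN_le_lintegral {k : ℕ} {φ : (Fin (k + 1) → ℝ) → ℂ} {Ω : Type} [MeasurableSpace Ω]
    (ρ : Measure Ω) [SigmaFinite ρ] (ψ : Fin (k + 1) → ℝ → Ω → ℂ)
    (hψ : ∀ i, Measurable fun p : ℝ × Ω => ψ i p.1 p.2)
    (hψ_bdd : ∀ i ω, ∃ C : ℝ, ∀ x, ‖ψ i x ω‖ ≤ C)
    (hφ : ∀ l : Fin (k + 1) → ℝ, φ l = ∫ ω, (∏ i, ψ i (l i) ω) ∂ρ)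
    {g : Ω → ℝ≥0∞} (hg : Measurable g)
    (hψg : ∀ᵐ ω ∂ρ, ∏ i, ⨆ x : ℝ, (‖ψ i x ω‖₊ : ℝ≥0∞) ≤ g ω) :
    iptpNormN k φ ≤ ∫⁻ ω, g ω ∂ρ :=
  calc iptpNormN k φ ≤ upperIntegral ρ fun ω => ∏ i, ⨆ x : ℝ, (‖ψ i x ω‖₊ : ℝ≥0∞) :=
        sInf_le ⟨Ω, _, ρ, ψ, ‹_›, hψ, hψ_bdd, hφ, rfl⟩
    _ ≤ ∫⁻ ω, g ω ∂ρ := iInf_le_of_le g (iInf_le_of_le hg (iInf_le _ hψg))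

lemma measurable_simplexCoord (k : ℕ) (i : Fin (k + 1)) :
    Measurable fun s : Fin k → ℝ => simplexCoord k s i := by
  unfold simplexCoord
  split_ifs <;> fun_prop

section FourierFactor

variable {m : Measure ℝ} {w : ℝ → ℂ}

-- The weight `(iξ)^j w(ξ)` is put on the last factor only, so that every other factor has
-- sup norm `1`.
noncomputable def fourierFactor (w : ℝ → ℂ) (j : ℕ) (i : Fin (j + 1)) (x : ℝ)
    (ω : (Fin j → ℝ) × ℝ) : ℂ :=
  Complex.exp (Complex.I * simplexCoord j ω.1 i * x * ω.2) *
    if i = Fin.last j then (Complex.I * ω.2) ^ j * w ω.2 else 1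

lemma measurable_fourierFactor (hw : Measurable w) (j : ℕ) (i : Fin (j + 1)) :
    Measurable fun p : ℝ × (Fin j → ℝ) × ℝ => fourierFactor w j i p.1 p.2 := by
  have := measurable_simplexCoord j i
  unfold fourierFactor
  split_ifs <;> fun_prop

lemma norm_fourierFactor_le (hw : ∀ ξ, ‖w ξ‖ ≤ 1) (j : ℕ) (i : Fin (j + 1)) (x : ℝ)
    (ω : (Fin j → ℝ) × ℝ) :
    ‖fourierFactor w j i x ω‖ ≤ if i = Fin.last j then ‖ω.2‖ ^ j else 1 := by
  unfold fourierFactor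
  rw [norm_mul, Complex.norm_exp]
  split_ifs
  · simpa using norm_I_mul_pow_mul_le hw j ω.2
  · simp

lemma enorm_fourierFactor_le (hw : ∀ ξ, ‖w ξ‖ ≤ 1) (j : ℕ) (i : Fin (j + 1)) (x : ℝ)
    (ω : (Fin j → ℝ) × ℝ) :
    ‖fourierFactor w j i x ω‖ₑ ≤ if i = Fin.last j then ‖ω.2‖ₑ ^ j else 1 := by
  refine (ofReal_norm _).symm.trans_le <|
    (ENNReal.ofReal_le_ofReal (norm_fourierFactor_le hw j i x ω)).trans_eq ?_
  split_ifs <;> simp [ENNReal.ofReal_pow, Real.enorm_eq_ofReal_abs]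

lemma prod_fourierFactor (j : ℕ) (x : Fin (j + 1) → ℝ) (s : Fin j → ℝ) (ξ : ℝ) :
    ∏ i, fourierFactor w j i (x i) (s, ξ) =
      (∏ i, Complex.exp (Complex.I * simplexCoord j s i * x i * ξ)) *
        (Complex.I * ξ) ^ j * w ξ := by
  simp only [fourierFactor, Finset.prod_mul_distrib, Finset.prod_ite_eq', Finset.mem_univ, if_true]
  ring

lemma prod_iSup_enorm_fourierFactor_le (hw : ∀ ξ, ‖w ξ‖ ≤ 1) (j : ℕ)
    (ω : (Fin j → ℝ) × ℝ) :
    ∏ i, ⨆ x : ℝ, (‖fourierFactor w j i x ω‖₊ : ℝ≥0∞) ≤ ‖ω.2‖ₑ ^ j :=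
  calc ∏ i, ⨆ x : ℝ, (‖fourierFactor w j i x ω‖₊ : ℝ≥0∞)
      ≤ ∏ i, if i = Fin.last j then ‖ω.2‖ₑ ^ j else 1 :=
        Finset.prod_le_prod' fun i _ => iSup_le fun x => enorm_fourierFactor_le hw j i x ω
    _ = ‖ω.2‖ₑ ^ j := by simp

lemma integrable_prod_fourierFactor [SFinite m]
    (hw : ∀ ξ, ‖w ξ‖ ≤ 1) (hwm : Measurable w) {j : ℕ} (hj : ∫⁻ ξ, ‖ξ‖ₑ ^ j ∂m < ∞)
    (x : Fin (j + 1) → ℝ) :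
    Integrable (fun ω => ∏ i, fourierFactor w j i (x i) ω)
      ((volume.restrict (simplexSet j)).prod m) := by
  refine ⟨(Finset.measurable_prod _ fun i _ => (measurable_fourierFactor hwm j i).comp
    (measurable_const.prodMk measurable_id)).aestronglyMeasurable, ?_⟩
  refine (lintegral_mono fun ω => ?_).trans_lt
    ((lintegral_enorm_snd_pow m j).trans_lt (mul_lt_top ofReal_lt_top hj))
  calc ‖∏ i, fourierFactor w j i (x i) ω‖ₑ = ∏ i, ‖fourierFactor w j i (x i) ω‖ₑ := by
        simp [enorm_eq_nnnorm, nnnorm_prod]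
    _ ≤ ∏ i, ⨆ y : ℝ, (‖fourierFactor w j i y ω‖₊ : ℝ≥0∞) :=
        Finset.prod_le_prod' fun i _ => le_iSup (fun y => (‖fourierFactor w j i y ω‖₊ : ℝ≥0∞)) (x i)
    _ ≤ ‖ω.2‖ₑ ^ j := prod_iSup_enorm_fourierFactor_le hw j ω

lemma integral_prod_fourierFactor [SFinite m]
    (hw : ∀ ξ, ‖w ξ‖ ≤ 1) (hwm : Measurable w) {j : ℕ} (hj : ∫⁻ ξ, ‖ξ‖ₑ ^ j ∂m < ∞)
    (x : Fin (j + 1) → ℝ) :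
    ∫ ω, ∏ i, fourierFactor w j i (x i) ω ∂(volume.restrict (simplexSet j)).prod m =
      ∫ s in simplexSet j, ∫ ξ,
        (∏ i, Complex.exp (Complex.I * simplexCoord j s i * x i * ξ)) *
          (Complex.I * ξ) ^ j * w ξ ∂m := by
  rw [integral_prod _ (integrable_prod_fourierFactor hw hwm hj x)]
  simp only [prod_fourierFactor]

lemma divDiffE_fourierMoment_zero (hw : ∀ ξ, ‖w ξ‖ ≤ 1)
    (hwm : AEStronglyMeasurable w m) {j : ℕ}
    (hmom : ∀ n ≤ j, Integrable (fun ξ : ℝ => ‖ξ‖ ^ n) m) (x : Fin (j + 1) → ℝ) :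
    divDiffE (fourierMoment m w 0) j x =
      ∫ s in simplexSet j, ∫ ξ,
        (∏ i, Complex.exp (Complex.I * simplexCoord j s i * x i * ξ)) *
          (Complex.I * ξ) ^ j * w ξ ∂m := by
  simp only [divDiffE, iteratedDeriv_fourierMoment hw hwm hmom le_rfl, fourierMoment,
    ← Complex.exp_sum]
  push_cast
  simp only [Finset.mul_sum, Finset.sum_mul, mul_assoc]

end FourierFactor

theorem stmt19_general (k : ℕ) (m : Measure ℝ) [IsFiniteMeasure m]
    (w : ℝ → ℂ) (hw : ∀ ξ, ‖w ξ‖ = 1) (hwmeas : Measurable w)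
    (f : ℝ → ℂ)
    (hf : ∀ t : ℝ, f t = ∫ ξ : ℝ, Complex.exp (Complex.I * t * ξ) * w ξ ∂m)
    (hmom : ∫⁻ ξ : ℝ, (‖ξ‖₊ : ℝ≥0∞) ^ k ∂m < ∞)
    (j : ℕ) (hjk : j ≤ k) :
    (∀ l : Fin (j + 1) → ℝ,
      divDiffE f j l =
        ∫ s in simplexSet j,
          (∫ ξ : ℝ,
            (∏ i, Complex.exp (Complex.I * ((simplexCoord j s i : ℝ) : ℂ) * (l i : ℝ) * ξ)) *
              (Complex.I * ξ) ^ j * w ξ ∂m)) ∧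
    iptpNormN j (divDiffE f j) ≤
      ENNReal.ofReal (1 / (Nat.factorial j : ℝ)) * ∫⁻ ξ : ℝ, (‖ξ‖₊ : ℝ≥0∞) ^ j ∂m := by
  obtain rfl : f = fourierMoment m w 0 := funext fun t => by simp [hf, fourierMoment]
  have hw_le : ∀ ξ, ‖w ξ‖ ≤ 1 := fun ξ => (hw ξ).le
  have hmom_j : ∀ n ≤ j, Integrable (fun ξ : ℝ => ‖ξ‖ ^ n) m := fun n hn =>
    integrable_norm_pow_of_le (hn.trans hjk) (integrable_norm_pow_iff_lintegral_lt_top.2 hmom)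
  have hj := integrable_norm_pow_iff_lintegral_lt_top.1 (hmom_j j le_rfl)
  have hdecomp := divDiffE_fourierMoment_zero hw_le hwmeas.aestronglyMeasurable hmom_j
  refine ⟨hdecomp, ?_⟩
  calc iptpNormN j (divDiffE (fourierMoment m w 0) j)
      ≤ ∫⁻ ω, ‖ω.2‖ₑ ^ j ∂(volume.restrict (simplexSet j)).prod m :=
        iptpNormN_le_lintegral _ (fourierFactor w j) (measurable_fourierFactor hwmeas j)
          (fun i ω => ⟨_, fun x => norm_fourierFactor_le hw_le j i x ω⟩)
          (fun x => (hdecomp x).trans (integral_prod_fourierFactor hw_le hwmeas hj x).symm)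
          (by fun_prop) (ae_of_all _ (prod_iSup_enorm_fourierFactor_le hw_le j))
    _ = _ := lintegral_enorm_snd_pow m j

/-- If `f(λ) = ∫ e^{iλξ} μ(dξ)` for a complex Borel measure `μ = w·m` (with `|w| = 1` and `m`
a finite positive measure) having finite `k`-th moment, then for each `1 ≤ j ≤ k` the `j`-th
divided difference decomposes as
`f^{[j]}(λ) = ∫_{Δ_j} ∫_ℝ e^{it₁λ₁ξ} ⋯ e^{it_{j+1}λ_{j+1}ξ} (iξ)^j μ(dξ) ρ_j(dt)`, an
integral projective decomposition witnessing
`‖f^{[j]}‖_{⊗̂ᵢ} ≤ (1/j!) ∫ |ξ|^j |μ|(dξ)`. -/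
theorem stmt19 (k : ℕ) (m : Measure ℝ) [IsFiniteMeasure m]
    (w : ℝ → ℂ) (hw : ∀ ξ, ‖w ξ‖ = 1) (hwmeas : Measurable w)
    (f : ℝ → ℂ)
    (hf : ∀ t : ℝ, f t = ∫ ξ : ℝ, Complex.exp (Complex.I * t * ξ) * w ξ ∂m)
    (hmom : ∫⁻ ξ : ℝ, (‖ξ‖₊ : ℝ≥0∞) ^ k ∂m < ∞)
    (j : ℕ) (hj1 : 1 ≤ j) (hjk : j ≤ k) :
    (∀ l : Fin (j + 1) → ℝ,
      divDiffE f j l =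
        ∫ s in simplexSet j,
          (∫ ξ : ℝ,
            (∏ i, Complex.exp (Complex.I * ((simplexCoord j s i : ℝ) : ℂ) * (l i : ℝ) * ξ)) *
              (Complex.I * ξ) ^ j * w ξ ∂m)) ∧
    iptpNormN j (divDiffE f j) ≤
      ENNReal.ofReal (1 / (Nat.factorial j : ℝ)) * ∫⁻ ξ : ℝ, (‖ξ‖₊ : ℝ≥0∞) ^ j ∂m :=
  stmt19_general k m w hw hwmeas f hf hmom j hjk
end
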